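/- If F : ℝ^m → ℝ is continuously differentiable at x and D ⊂ ℝ^m is a positive spanning set, and F(x) ≤ F(x + δ d) for all d ∈ D and for arbitrarily small δ > 0 (along a sequence δ_k → 0⁺), then ∇F(x) = 0. -/

import Mathlib

/-!
Polling direction `d` yields `0 ≤ F'(x) d` as the limit of the nonnegative difference quotients
`(F (x + δ • d) - F x) / δ` along the unsuccessful step sizes `δ → 0⁺`. A linear functional that
is nonnegative on a positive spanning set is nonnegative on both `y` and `-y`, hence zero.
-/

open Filter Topology

def IsPositiveSpanningSet (R : Type*) {M : Type*} [Semiring R] [PartialOrder R]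
    [AddCommMonoid M] [Module R M] (D : Finset M) : Prop :=
  ∀ y : M, ∃ c : M → R, (∀ d ∈ D, 0 ≤ c d) ∧ y = ∑ d ∈ D, c d • d

theorem LinearMap.eq_zero_of_nonneg_on_positiveSpanningSet {R M : Type*} [Ring R]
    [PartialOrder R] [IsOrderedRing R] [AddCommGroup M] [Module R M] {D : Finset M}
    (hD : IsPositiveSpanningSet R D) {L : M →ₗ[R] R} (hL : ∀ d ∈ D, 0 ≤ L d) : L = 0 := by
  have nonneg : ∀ y, 0 ≤ L y := fun y => by
    obtain ⟨c, hc, rfl⟩ := hD y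
    simpa only [map_sum, map_smul] using
      Finset.sum_nonneg fun d hd => smul_nonneg (hc d hd) (hL d hd)
  ext y
  exact le_antisymm (by simpa using nonneg (-y)) (nonneg y)

theorem HasFDerivAt.nonneg_apply_of_frequently_le {E : Type*} [NormedAddCommGroup E]
    [NormedSpace ℝ E] {f : E → ℝ} {L : E →L[ℝ] ℝ} {x d : E} (hf : HasFDerivAt f L x)
    (h : ∃ᶠ t in 𝓝[>] (0 : ℝ), f x ≤ f (x + t • d)) : 0 ≤ L d := by
  have hline : HasDerivAt (fun t : ℝ => f (x + t • d)) (L d) 0 := by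
    have hf0 : HasFDerivAt f L (x + (0 : ℝ) • d) := by simpa using hf
    exact hf0.comp_hasDerivAt (0 : ℝ) <| by
      simpa using ((hasDerivAt_id (0 : ℝ)).smul_const d).const_add x
  refine ge_of_tendsto_of_frequently hline.tendsto_slope_zero_right (h.mp ?_)
  filter_upwards [self_mem_nhdsWithin] with t (ht : 0 < t) hle
  simpa using smul_nonneg (inv_nonneg.mpr ht.le) (sub_nonneg.mpr hle)

theorem stationary_of_unsuccessful_polling {m : ℕ}
    (F : EuclideanSpace ℝ (Fin m) → ℝ) (x : EuclideanSpace ℝ (Fin m))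
    (hF : ContDiffAt ℝ 1 F x)
    (D : Finset (EuclideanSpace ℝ (Fin m)))
    (hspan : ∀ y : EuclideanSpace ℝ (Fin m),
      ∃ c : EuclideanSpace ℝ (Fin m) → ℝ,
        (∀ d ∈ D, 0 ≤ c d) ∧ y = ∑ d ∈ D, c d • d)
    (hpoll : ∀ ε > (0 : ℝ), ∃ δ, 0 < δ ∧ δ < ε ∧
      ∀ d ∈ D, F x ≤ F (x + δ • d)) :
    fderiv ℝ F x = 0 := by
  have hderiv := (hF.differentiableAt one_ne_zero).hasFDerivAt
  have hfreq : ∃ᶠ δ in 𝓝[>] (0 : ℝ), ∀ d ∈ D, F x ≤ F (x + δ • d) :=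
    (nhdsGT_basis (0 : ℝ)).frequently_iff.mpr fun ε hε =>
      let ⟨δ, hδ, hδε, hδD⟩ := hpoll ε hε
      ⟨δ, ⟨hδ, hδε⟩, hδD⟩
  refine ContinuousLinearMap.coe_injective <|
    LinearMap.eq_zero_of_nonneg_on_positiveSpanningSet hspan fun d hd => ?_
  exact hderiv.nonneg_apply_of_frequently_le (hfreq.mono fun δ hδ => hδ d hd)
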